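/- arXiv:2502.08256 — 6 statements merged into one kernel-verified Lean document; each statement's English description precedes it below -/
import Mathlib

section
/- Let λ be a Young diagram contained in the k×m rectangle with d boxes, with row lengths λ_1 ≥ ⋯ ≥ λ_k and column lengths λ'_1 ≥ ⋯ ≥ λ'_m (the transposed diagram). For all upper-triangular matrices A ∈ ℂ^{k×k} (entries a_{il}) and B ∈ ℂ^{m×m} (entries b_{jr}), the induced action on the Schubert vector satisfies Λ^d(A⊗B)(v_λ) = (∏_{i=1}^k a_{ii}^{λ_i}) · (∏_{j=1}^m b_{jj}^{λ'_j}) · v_λ. In particular, v_λ is a highest weight vector of weight (λ, λ') for the action of GL(ℂ^k) × GL(ℂ^m). -/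
open TensorProduct

noncomputable section

set_option synthInstance.maxHeartbeats 400000
set_option maxHeartbeats 1000000

/-- The complex vector space `ℂ^k ⊗ ℂ^m`. -/
abbrev TensorC (k m : ℕ) := TensorProduct ℂ (Fin k → ℂ) (Fin m → ℂ)

/-- The Schubert vector `v_λ = (e_{i₁}⊗f_{j₁}) ∧ ⋯ ∧ (e_{i_d}⊗f_{j_d})` in
`⋀^d_ℂ(ℂ^k ⊗ ℂ^m)` determined by an enumeration `c` of the cells of a Young diagram. -/
def schubertVecC (k m d : ℕ) (c : Fin d → Fin k × Fin m) : ExteriorAlgebra ℂ (TensorC k m) :=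
  ExteriorAlgebra.ιMulti ℂ d fun t =>
    (Pi.single (c t).1 (1 : ℂ)) ⊗ₜ[ℂ] (Pi.single (c t).2 (1 : ℂ))

/-- The action of a pair of complex matrices `(A, B)` on the exterior algebra of `ℂ^k ⊗ ℂ^m`
via the tensor product map `A ⊗ B`; its restriction to degree `d` is `Λ^d(A⊗B)`. -/
def actC (k m : ℕ) (A : Matrix (Fin k) (Fin k) ℂ) (B : Matrix (Fin m) (Fin m) ℂ) :
    ExteriorAlgebra ℂ (TensorC k m) →ₐ[ℂ] ExteriorAlgebra ℂ (TensorC k m) :=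
  ExteriorAlgebra.map (TensorProduct.map (Matrix.toLin' A) (Matrix.toLin' B))

open Finset

/-!
Expanding `Λ^d(A ⊗ B)(v_λ)` multilinearly gives a sum over all maps `r : Fin d → Fin k × Fin m`
of `∏ₜ a_{r(t)₁ c(t)₁} b_{r(t)₂ c(t)₂}` times the wedge of the `e_{r(t)₁} ⊗ f_{r(t)₂}`. By
triangularity only `r ≤ c` (cellwise in the product order) contributes, and the wedge vanishes
unless `r` is injective. Such an `r` lands in `λ` since `λ` is a lower set, hence enumerates all of
its cells, so the coordinate sums of `r` and `c` agree and `r = c`. The remaining diagonal term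
has coefficient `∏ᵢ a_{ii}^{λᵢ} ∏ⱼ b_{jj}^{λ'ⱼ}`, as row `i` holds `λᵢ` cells and column `j`
holds `λ'ⱼ`.
-/

lemma Finset.prod_comp_eq_prod_pow_card_filter {ι κ M : Type*} [Fintype ι] [Fintype κ]
    [DecidableEq κ] [CommMonoid M] (f : κ → M) (g : ι → κ) :
    ∏ t, f (g t) = ∏ i, f i ^ #{t | g t = i} := by
  rw [← prod_fiberwise univ g]
  refine prod_congr rfl fun i _ => ?_
  rw [prod_congr rfl fun t ht => by rw [(mem_filter.1 ht).2], prod_const]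

lemma MultilinearMap.map_sum_smul {R M N ι κ : Type*} [CommSemiring R] [AddCommMonoid M]
    [AddCommMonoid N] [Module R M] [Module R N] [Fintype ι] [DecidableEq ι] [Fintype κ]
    (f : MultilinearMap R (fun _ : ι => M) N) (a : ι → κ → R) (w : κ → M) :
    f (fun t => ∑ q, a t q • w q) = ∑ r : ι → κ, (∏ t, a t (r t)) • f (w ∘ r) := by
  rw [f.map_sum]
  exact sum_congr rfl fun r _ => f.map_smul_univ _ _

lemma Matrix.BlockTriangular.le_of_ne_zero {n R : Type*} [LinearOrder n] [Zero R]
    {A : Matrix n n R} (hA : A.BlockTriangular id) {i j : n} (h : A i j ≠ 0) : i ≤ j :=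
  le_of_not_gt fun hji => h (hA hji)

lemma Matrix.toLin'_single_one {n R : Type*} [Fintype n] [DecidableEq n] [CommSemiring R]
    (A : Matrix n n R) (i : n) :
    Matrix.toLin' A (Pi.single i 1) = ∑ i', A i' i • Pi.single i' 1 := by
  ext x
  simp [Pi.single_apply]

lemma TensorProduct.map_toLin'_single_tmul_single {n p R : Type*} [Fintype n] [DecidableEq n]
    [Fintype p] [DecidableEq p] [CommSemiring R] (A : Matrix n n R) (B : Matrix p p R)
    (i : n) (j : p) :
    map (Matrix.toLin' A) (Matrix.toLin' B) (Pi.single i 1 ⊗ₜ[R] Pi.single j 1)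
      = ∑ q : n × p, (A q.1 i * B q.2 j) • (Pi.single q.1 1 ⊗ₜ[R] Pi.single q.2 1) := by
  simp only [map_tmul, Matrix.toLin'_single_one, sum_tmul, tmul_sum, Fintype.sum_prod_type_right,
    smul_tmul_smul]

namespace YoungDiagram

variable (μ : YoungDiagram) {ι : Type*} [Fintype ι]

lemma image_eq_cells_of_injective {e : ι → ℕ × ℕ} (he : Function.Injective e)
    (hmem : ∀ t, e t ∈ μ) (hcard : μ.card ≤ Fintype.card ι) : univ.image e = μ.cells := by
  refine eq_of_subset_of_card_le (fun x hx => ?_) ?_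
  · obtain ⟨t, -, rfl⟩ := mem_image.1 hx
    exact hmem t
  · rwa [card_image_of_injective _ he, card_univ]

lemma card_filter_fst_eq_rowLen {e : ι → ℕ × ℕ} (he : Function.Injective e)
    (himage : univ.image e = μ.cells) (i : ℕ) : #{t | (e t).1 = i} = μ.rowLen i := by
  rw [rowLen_eq_card, row, ← himage, filter_image, card_image_of_injective _ he]

lemma card_filter_snd_eq_colLen {e : ι → ℕ × ℕ} (he : Function.Injective e)
    (himage : univ.image e = μ.cells) (j : ℕ) : #{t | (e t).2 = j} = μ.colLen j := by
  rw [colLen_eq_card, col, ← himage, filter_image, card_image_of_injective _ he]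

lemma eq_of_injective_of_le {c r : ι → ℕ × ℕ} (hc : Function.Injective c)
    (hcells : univ.image c = μ.cells) (hr : Function.Injective r) (hle : r ≤ c) : r = c := by
  have hrcells : univ.image r = μ.cells := by
    refine μ.image_eq_cells_of_injective hr (fun t => ?_) ?_
    · have hct : c t ∈ μ.cells := hcells ▸ mem_image_of_mem c (mem_univ t)
      exact μ.up_left_mem (hle t).1 (hle t).2 hct
    · rw [YoungDiagram.card, ← hcells, card_image_of_injective _ hc, card_univ]
  have hsum_image {e : ι → ℕ × ℕ} (he : Function.Injective e) :
      ∑ t, ((e t).1 + (e t).2) = ∑ x ∈ univ.image e, (x.1 + x.2) :=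
    (sum_image (f := fun x => x.1 + x.2) fun _ _ _ _ h => he h).symm
  have hsum : ∑ t, ((r t).1 + (r t).2) = ∑ t, ((c t).1 + (c t).2) := by
    rw [hsum_image hr, hsum_image hc, hrcells, hcells]
  have hdiag := (sum_eq_sum_iff_of_le fun t _ => add_le_add (hle t).1 (hle t).2).1 hsum
  funext t
  have hdiag_t := hdiag t (mem_univ t)
  exact Prod.ext (by linarith [(hle t).1, (hle t).2]) (by linarith [(hle t).1, (hle t).2])

end YoungDiagram

lemma actC_schubertVecC (k m d : ℕ) (A : Matrix (Fin k) (Fin k) ℂ) (B : Matrix (Fin m) (Fin m) ℂ)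
    (c : Fin d → Fin k × Fin m) :
    actC k m A B (schubertVecC k m d c)
      = ∑ r, (∏ t, A (r t).1 (c t).1 * B (r t).2 (c t).2) • schubertVecC k m d r := by
  let w (q : Fin k × Fin m) : TensorC k m := Pi.single q.1 1 ⊗ₜ Pi.single q.2 1
  have hmap : TensorProduct.map (Matrix.toLin' A) (Matrix.toLin' B) ∘ (w ∘ c)
      = fun t => ∑ q, (A q.1 (c t).1 * B q.2 (c t).2) • w q :=
    funext fun t => TensorProduct.map_toLin'_single_tmul_single A B (c t).1 (c t).2
  change ExteriorAlgebra.map _ (ExteriorAlgebra.ιMulti ℂ d (w ∘ c)) = _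
  rw [ExteriorAlgebra.map_apply_ιMulti, hmap]
  exact (ExteriorAlgebra.ιMulti ℂ d).toMultilinearMap.map_sum_smul _ w

lemma schubertVecC_eq_zero_of_not_injective {k m d : ℕ} {r : Fin d → Fin k × Fin m}
    (hr : ¬Function.Injective r) : schubertVecC k m d r = 0 :=
  AlternatingMap.map_eq_zero_of_not_injective _ _ fun h =>
    hr (Function.Injective.of_comp (f := fun q : Fin k × Fin m =>
      (Pi.single q.1 1 ⊗ₜ Pi.single q.2 1 : TensorC k m)) h)

/-- `Matrix.BlockTriangular · id` means upper-triangular; `rowLen`/`colLen` index rows and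
columns from 0. -/
theorem stmt_4_general (k m d : ℕ)
    (lam : YoungDiagram) (hcard : lam.card = d)
    (c : Fin d → Fin k × Fin m) (hcinj : Function.Injective c)
    (hcmem : ∀ t, (((c t).1 : ℕ), ((c t).2 : ℕ)) ∈ lam.cells)
    (A : Matrix (Fin k) (Fin k) ℂ) (B : Matrix (Fin m) (Fin m) ℂ)
    (hA : A.BlockTriangular id) (hB : B.BlockTriangular id) :
    actC k m A B (schubertVecC k m d c)
      = ((∏ i : Fin k, A i i ^ lam.rowLen (i : ℕ)) *
          (∏ j : Fin m, B j j ^ lam.colLen (j : ℕ))) • schubertVecC k m d c := by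
  classical
  set cell : Fin k × Fin m → ℕ × ℕ := Prod.map Fin.val Fin.val
  have hcell : Function.Injective cell := Fin.val_injective.prodMap Fin.val_injective
  have hcells : univ.image (cell ∘ c) = lam.cells :=
    lam.image_eq_cells_of_injective (hcell.comp hcinj) hcmem (by simp [hcard])
  rw [actC_schubertVecC, sum_eq_single c]
  · rw [prod_mul_distrib, prod_comp_eq_prod_pow_card_filter (fun i => A i i) (fun t => (c t).1),
      prod_comp_eq_prod_pow_card_filter (fun j => B j j) (fun t => (c t).2)]
    congr 4 with i <;> congr 1
    · simpa [cell, Fin.ext_iff] using lam.card_filter_fst_eq_rowLen (hcell.comp hcinj) hcells i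
    · simpa [cell, Fin.ext_iff] using lam.card_filter_snd_eq_colLen (hcell.comp hcinj) hcells i
  · intro r _ hrc
    by_cases hcoeff : ∏ t, A (r t).1 (c t).1 * B (r t).2 (c t).2 = 0
    · rw [hcoeff, zero_smul]
    have hle (t : Fin d) : cell (r t) ≤ cell (c t) := by
      have hne := prod_ne_zero_iff.1 hcoeff t (mem_univ t)
      exact ⟨hA.le_of_ne_zero (left_ne_zero_of_mul hne),
        hB.le_of_ne_zero (right_ne_zero_of_mul hne)⟩
    by_cases hr : Function.Injective r
    · exact absurd (hcell.comp_left
        (lam.eq_of_injective_of_le (hcell.comp hcinj) hcells (hcell.comp hr) hle)) hrc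
    · rw [schubertVecC_eq_zero_of_not_injective hr, smul_zero]
  · exact absurd (mem_univ c)

/-- For every upper-triangular `A ∈ ℂ^{k×k}` and `B ∈ ℂ^{m×m}`,
`Λ^d(A⊗B)(v_λ) = (∏ᵢ a_{ii}^{λ_i}) (∏ⱼ b_{jj}^{λ'_j}) · v_λ`, where `λ_i` are the row lengths
and `λ'_j` the column lengths of `λ`.  In particular, `v_λ` is a highest weight vector of
weight `(λ, λ')` for `GL(ℂ^k) × GL(ℂ^m)`.  (`Matrix.BlockTriangular · id` means
upper-triangular; `rowLen`/`colLen` take 0-indexed rows/columns.) -/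
theorem stmt_4 (k m d : ℕ) (hk : 1 ≤ k) (hm : 1 ≤ m)
    (lam : YoungDiagram) (hcard : lam.card = d)
    (hrect : ∀ x ∈ lam.cells, x.1 < k ∧ x.2 < m)
    (c : Fin d → Fin k × Fin m) (hcinj : Function.Injective c)
    (hcmem : ∀ t, (((c t).1 : ℕ), ((c t).2 : ℕ)) ∈ lam.cells)
    (A : Matrix (Fin k) (Fin k) ℂ) (B : Matrix (Fin m) (Fin m) ℂ)
    (hA : A.BlockTriangular id) (hB : B.BlockTriangular id) :
    actC k m A B (schubertVecC k m d c)
      = ((∏ i : Fin k, A i i ^ lam.rowLen (i : ℕ)) *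
          (∏ j : Fin m, B j j ^ lam.colLen (j : ℕ))) • schubertVecC k m d c :=
  stmt_4_general k m d lam hcard c hcinj hcmem A B hA hB
end
end

section
/- For a Young diagram λ contained in the k×m rectangle with d boxes, the ℝ-linear span of the orthogonal orbit {Λ^d(g⊗h)·v_λ : g ∈ O(k), h ∈ O(m)} inside ⋀^d(ℝ^k ⊗ ℝ^m) equals the ℝ-linear span of the full general-linear orbit {Λ^d(A⊗B)·v_λ : A ∈ GL(ℝ^k), B ∈ GL(ℝ^m)}. -/
open TensorProduct

noncomputable section

set_option synthInstance.maxHeartbeats 400000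
set_option maxHeartbeats 1000000

/-- The real vector space `ℝ^k ⊗ ℝ^m`. -/
abbrev TensorR (k m : ℕ) := TensorProduct ℝ (Fin k → ℝ) (Fin m → ℝ)

/-- The Schubert vector `v_λ = (e_{i₁}⊗f_{j₁}) ∧ ⋯ ∧ (e_{i_d}⊗f_{j_d})` in
`⋀^d(ℝ^k ⊗ ℝ^m)` determined by an enumeration `c` of the cells of a Young diagram. -/
def schubertVecR (k m d : ℕ) (c : Fin d → Fin k × Fin m) : ExteriorAlgebra ℝ (TensorR k m) :=
  ExteriorAlgebra.ιMulti ℝ d fun t =>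
    (Pi.single (c t).1 (1 : ℝ)) ⊗ₜ[ℝ] (Pi.single (c t).2 (1 : ℝ))

/-- The action of a pair of matrices `(A, B)` on the exterior algebra of `ℝ^k ⊗ ℝ^m` via the
tensor product map `A ⊗ B`; its restriction to degree `d` is `Λ^d(A⊗B)`. -/
def actR (k m : ℕ) (A : Matrix (Fin k) (Fin k) ℝ) (B : Matrix (Fin m) (Fin m) ℝ) :
    ExteriorAlgebra ℝ (TensorR k m) →ₐ[ℝ] ExteriorAlgebra ℝ (TensorR k m) :=
  ExteriorAlgebra.map (TensorProduct.map (Matrix.toLin' A) (Matrix.toLin' B))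

/-!
Every real square matrix factors as `Q R` with `Q` orthogonal and `R` upper triangular (Gram–Schmidt
applied to its columns), and `Λ^d(A ⊗ B)` is multiplicative in `(A, B)`. So it suffices that a pair
of upper triangular matrices acts on `v_λ` by a scalar. In the basis `e_i ⊗ f_j`, ordered
componentwise, `R ⊗ S` is triangular, so expanding `Λ^d(R ⊗ S) v_λ` multilinearly only produces
wedges of basis vectors indexed by cells weakly above-left of those of `λ`. Since `λ` is a lower
set, any such wedge with distinct factors is indexed by `λ` again, and then by well-founded
induction on the cells it is `v_λ` itself.
-/

theorem Matrix.exists_mem_unitaryGroup_mul_isUpperTriangular {𝕜 n : Type*} [RCLike 𝕜]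
    [Fintype n] [DecidableEq n] [LinearOrder n] [LocallyFiniteOrderBot n] (A : Matrix n n 𝕜) :
    ∃ Q ∈ Matrix.unitaryGroup n 𝕜, ∃ R : Matrix n n 𝕜, R.IsUpperTriangular ∧ A = Q * R := by
  let f : n → EuclideanSpace 𝕜 n := fun j => WithLp.toLp 2 fun i => A i j
  let b := InnerProductSpace.gramSchmidtOrthonormalBasis finrank_euclideanSpace f
  refine ⟨(EuclideanSpace.basisFun n 𝕜).toBasis.toMatrix b,
    (EuclideanSpace.basisFun n 𝕜).toMatrix_orthonormalBasis_mem_unitary b,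
    b.toBasis.toMatrix f, InnerProductSpace.gramSchmidtOrthonormalBasis_inv_isUpperTriangular _ f,
    ?_⟩
  rw [← b.coe_toBasis, Module.Basis.toMatrix_mul_toMatrix]
  ext i j
  simp [Module.Basis.toMatrix_apply, f]

theorem Matrix.kroneckerMap_mul_eq_zero_of_not_le {R ι κ : Type*} [MulZeroClass R] [LinearOrder ι]
    [LinearOrder κ] {A : Matrix ι ι R} {B : Matrix κ κ R} (hA : A.IsUpperTriangular)
    (hB : B.IsUpperTriangular) {p q : ι × κ} (hpq : ¬ p ≤ q) :
    Matrix.kroneckerMap (· * ·) A B p q = 0 := by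
  rcases not_and_or.mp (Prod.mk_le_mk.not.mp hpq) with h | h
  · simp [hA (lt_of_not_ge h)]
  · simp [hB (lt_of_not_ge h)]

theorem Function.Injective.eq_of_le_of_mem_range {ι α : Type*} [PartialOrder α]
    [WellFoundedLT α] {r c : ι → α} (hr : Function.Injective r) (hle : ∀ t, r t ≤ c t)
    (hmem : ∀ t, r t ∈ Set.range c) : r = c := by
  suffices h : ∀ x t, c t = x → r t = x from funext fun t => h _ t rfl
  intro x
  induction x using WellFoundedLT.induction with
  | _ x ih =>
    rintro t rfl
    refine (hle t).eq_or_lt.resolve_right fun hlt => hlt.ne ?_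
    obtain ⟨t', ht'⟩ := hmem t
    rw [← ht', hr (ih _ (ht' ▸ hlt) t' rfl |>.trans ht')]

theorem YoungDiagram.isLowerSet_range_of_enumeration (lam : YoungDiagram) {k m d : ℕ}
    (hcard : lam.card = d) (c : Fin d → Fin k × Fin m) (hcinj : Function.Injective c)
    (hcmem : ∀ t, (((c t).1 : ℕ), ((c t).2 : ℕ)) ∈ lam.cells) : IsLowerSet (Set.range c) := by
  rintro _ p hp ⟨t, rfl⟩
  have hval : Function.Injective (Prod.map Fin.val Fin.val : Fin k × Fin m → ℕ × ℕ) :=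
    Fin.val_injective.prodMap Fin.val_injective
  obtain ⟨t', -, ht'⟩ := Finset.surj_on_of_inj_on_of_card_le (s := Finset.univ)
    (fun t _ => Prod.map Fin.val Fin.val (c t)) (fun t _ => hcmem t)
    (fun _ _ _ _ h => hcinj (hval h)) (by simp [hcard]) _ (lam.up_left_mem hp.1 hp.2 (hcmem t))
  exact ⟨t', hval ht'.symm⟩

namespace ExteriorAlgebra

variable {R M ι : Type*} [CommRing R] [AddCommGroup M] [Module R M] [Fintype ι] [DecidableEq ι]

theorem map_ιMulti_basis (b : Module.Basis ι R M) (f : M →ₗ[R] M) {d : ℕ} (c : Fin d → ι) :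
    map f (ιMulti R d (b ∘ c)) =
      ∑ r : Fin d → ι, (∏ t, LinearMap.toMatrix b b f (r t) (c t)) • ιMulti R d (b ∘ r) := by
  have hcol : f ∘ b ∘ c = fun t => ∑ i, LinearMap.toMatrix b b f i (c t) • b i := by
    funext t
    simp only [Function.comp_apply, LinearMap.toMatrix_apply, b.sum_repr]
  rw [map_apply_ιMulti, hcol, ← AlternatingMap.coe_multilinearMap, MultilinearMap.map_sum]
  simp only [AlternatingMap.coe_multilinearMap, AlternatingMap.map_smul_univ, Function.comp_def]

theorem map_ιMulti_basis_of_isLowerSet [PartialOrder ι] (b : Module.Basis ι R M)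
    (f : M →ₗ[R] M) (hf : ∀ i j, ¬ i ≤ j → LinearMap.toMatrix b b f i j = 0) {d : ℕ}
    (c : Fin d → ι) (hc : IsLowerSet (Set.range c)) :
    map f (ιMulti R d (b ∘ c)) =
      (∏ t, LinearMap.toMatrix b b f (c t) (c t)) • ιMulti R d (b ∘ c) := by
  rw [map_ιMulti_basis, Fintype.sum_eq_single c]
  intro r hrc
  by_cases hle : ∀ t, r t ≤ c t
  · obtain ⟨t₁, t₂, heq, hne⟩ := Function.not_injective_iff.mp fun hr =>
      hrc (hr.eq_of_le_of_mem_range hle fun t => hc (hle t) ⟨t, rfl⟩)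
    rw [AlternatingMap.map_eq_zero_of_eq _ (b ∘ r) (congrArg b heq) hne, smul_zero]
  · obtain ⟨t, ht⟩ := not_forall.mp hle
    rw [Finset.prod_eq_zero (Finset.mem_univ t) (hf _ _ ht), zero_smul]

end ExteriorAlgebra

abbrev tensorBasisR (k m : ℕ) : Module.Basis (Fin k × Fin m) ℝ (TensorR k m) :=
  (Pi.basisFun ℝ (Fin k)).tensorProduct (Pi.basisFun ℝ (Fin m))

theorem schubertVecR_eq_ιMulti_tensorBasisR (k m d : ℕ) (c : Fin d → Fin k × Fin m) :
    schubertVecR k m d c = ExteriorAlgebra.ιMulti ℝ d (tensorBasisR k m ∘ c) := by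
  simp [schubertVecR, Function.comp_def, Module.Basis.tensorProduct_apply']

theorem toMatrix_tensorBasisR_map {k m : ℕ} (A : Matrix (Fin k) (Fin k) ℝ)
    (B : Matrix (Fin m) (Fin m) ℝ) :
    LinearMap.toMatrix (tensorBasisR k m) (tensorBasisR k m)
      (TensorProduct.map (Matrix.toLin' A) (Matrix.toLin' B)) = Matrix.kroneckerMap (· * ·) A B := by
  simp [TensorProduct.toMatrix_map, LinearMap.toMatrix_eq_toMatrix']

theorem actR_mul (k m : ℕ) (A A' : Matrix (Fin k) (Fin k) ℝ) (B B' : Matrix (Fin m) (Fin m) ℝ)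
    (x : ExteriorAlgebra ℝ (TensorR k m)) :
    actR k m (A * A') (B * B') x = actR k m A B (actR k m A' B' x) := by
  rw [actR, actR, actR, ← AlgHom.comp_apply, ExteriorAlgebra.map_comp_map, Matrix.toLin'_mul,
    Matrix.toLin'_mul, TensorProduct.map_comp]

theorem actR_schubertVecR_of_isUpperTriangular {k m d : ℕ} {c : Fin d → Fin k × Fin m}
    (hc : IsLowerSet (Set.range c)) {A : Matrix (Fin k) (Fin k) ℝ} {B : Matrix (Fin m) (Fin m) ℝ}
    (hA : A.IsUpperTriangular) (hB : B.IsUpperTriangular) :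
    actR k m A B (schubertVecR k m d c)
      = (∏ t, A (c t).1 (c t).1 * B (c t).2 (c t).2) • schubertVecR k m d c := by
  rw [schubertVecR_eq_ιMulti_tensorBasisR, actR,
    ExteriorAlgebra.map_ιMulti_basis_of_isLowerSet _ _ _ c hc, toMatrix_tensorBasisR_map]
  · rfl
  · intro p q hpq
    rw [toMatrix_tensorBasisR_map]
    exact Matrix.kroneckerMap_mul_eq_zero_of_not_le hA hB hpq

theorem stmt_5_general (k m d : ℕ)
    (lam : YoungDiagram) (hcard : lam.card = d)
    (c : Fin d → Fin k × Fin m) (hcinj : Function.Injective c)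
    (hcmem : ∀ t, (((c t).1 : ℕ), ((c t).2 : ℕ)) ∈ lam.cells) :
    Submodule.span ℝ {w | ∃ g ∈ Matrix.orthogonalGroup (Fin k) ℝ,
        ∃ h ∈ Matrix.orthogonalGroup (Fin m) ℝ, w = actR k m g h (schubertVecR k m d c)}
      = Submodule.span ℝ {w | ∃ A : Matrix (Fin k) (Fin k) ℝ, ∃ B : Matrix (Fin m) (Fin m) ℝ,
          IsUnit A ∧ IsUnit B ∧ w = actR k m A B (schubertVecR k m d c)} := by
  have hc := lam.isLowerSet_range_of_enumeration hcard c hcinj hcmem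
  refine le_antisymm (Submodule.span_mono ?_) (Submodule.span_le.mpr ?_)
  · rintro w ⟨g, hg, h, hh, rfl⟩
    exact ⟨g, h, Unitary.isUnit_coe (U := ⟨g, hg⟩), Unitary.isUnit_coe (U := ⟨h, hh⟩), rfl⟩
  · rintro w ⟨A, B, -, -, rfl⟩
    obtain ⟨QA, hQA, RA, hRA, rfl⟩ := A.exists_mem_unitaryGroup_mul_isUpperTriangular
    obtain ⟨QB, hQB, RB, hRB, rfl⟩ := B.exists_mem_unitaryGroup_mul_isUpperTriangular
    rw [actR_mul, actR_schubertVecR_of_isUpperTriangular hc hRA hRB, map_smul]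
    exact Submodule.smul_mem _ _ (Submodule.subset_span ⟨QA, hQA, QB, hQB, rfl⟩)

/-- The `ℝ`-linear span of the orthogonal orbit
`{Λ^d(g⊗h)·v_λ : g ∈ O(k), h ∈ O(m)}` equals the `ℝ`-linear span of the full general-linear
orbit `{Λ^d(A⊗B)·v_λ : A ∈ GL(ℝ^k), B ∈ GL(ℝ^m)}` inside `⋀^d(ℝ^k ⊗ ℝ^m)`. -/
theorem stmt_5 (k m d : ℕ) (hk : 1 ≤ k) (hm : 1 ≤ m)
    (lam : YoungDiagram) (hcard : lam.card = d)
    (hrect : ∀ x ∈ lam.cells, x.1 < k ∧ x.2 < m)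
    (c : Fin d → Fin k × Fin m) (hcinj : Function.Injective c)
    (hcmem : ∀ t, (((c t).1 : ℕ), ((c t).2 : ℕ)) ∈ lam.cells) :
    Submodule.span ℝ {w | ∃ g ∈ Matrix.orthogonalGroup (Fin k) ℝ,
        ∃ h ∈ Matrix.orthogonalGroup (Fin m) ℝ, w = actR k m g h (schubertVecR k m d c)}
      = Submodule.span ℝ {w | ∃ A : Matrix (Fin k) (Fin k) ℝ, ∃ B : Matrix (Fin m) (Fin m) ℝ,
          IsUnit A ∧ IsUnit B ∧ w = actR k m A B (schubertVecR k m d c)} :=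
  stmt_5_general k m d lam hcard c hcinj hcmem
end
end

section
/- Let 0 < d < n. If w ∈ ⋀^d(ℝ^n) satisfies Λ^d(g)(w) = w for every g in the special orthogonal group SO(n), then w = 0. In other words, the subspace of SO(n)-invariant vectors in the d-th exterior power of ℝ^n is trivial for 0 < d < n. -/
/-!
A diagonal matrix `diag ε` acts on the basis vector `e_S` of `⋀^d ℝⁿ` by `∏_{k ∈ S} ε k`, so it
multiplies the `e_S`-coordinate of every vector by that sign. For `i ∈ S` and `j ∉ S`, which exist
for every `d`-subset `S` as `0 < d < n`, the matrix with `-1` in positions `i` and `j` lies in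
`SO(n)` and gives the sign `-1`: the `e_S`-coordinate of an invariant vector is its own negative.
-/

open Set Set.powersetCard

namespace exteriorPower

variable {R M N : Type*} [CommRing R] [AddCommGroup M] [Module R M] [AddCommGroup N] [Module R N]

theorem coe_map (n : ℕ) (f : M →ₗ[R] N) (x : ⋀[R]^n M) :
    (map n f x : ExteriorAlgebra R N) = ExteriorAlgebra.map f x := by
  have key : (⋀[R]^n N).subtype ∘ₗ map n f
      = (ExteriorAlgebra.map f).toLinearMap ∘ₗ (⋀[R]^n M).subtype := by
    refine LinearMap.ext_on (ιMulti_span R n (M := M)) ?_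
    rintro _ ⟨v, rfl⟩
    simp [ExteriorAlgebra.map_apply_ιMulti]
  exact LinearMap.congr_fun key x

variable {I : Type*} [LinearOrder I] {n : ℕ}

theorem map_ιMulti_family_of_apply_eq_smul {b : I → M} {ε : I → R} {f : M →ₗ[R] M}
    (hf : ∀ i, f (b i) = ε i • b i) (s : powersetCard I n) :
    map n f (ιMulti_family R n b s) = (∏ i ∈ s.val, ε i) • ιMulti_family R n b s := by
  have hprod : ∏ k, ε (ofFinEmbEquiv.symm s k) = ∏ i ∈ s.val, ε i := by
    conv_rhs => rw [← Finset.map_orderEmbOfFin_univ s.val s.prop, Finset.prod_map]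
    rfl
  rw [map_apply_ιMulti_family, ιMulti_family, ιMulti_family, ← hprod,
    ← (ιMulti R n).map_smul_univ]
  congr 1
  ext k
  simp [hf]

theorem basis_repr_map_of_apply_eq_smul (b : Module.Basis I R M) {ε : I → R} {f : M →ₗ[R] M}
    (hf : ∀ i, f (b i) = ε i • b i) (x : ⋀[R]^n M) (s : powersetCard I n) :
    (b.exteriorPower n).repr (map n f x) s =
      (∏ i ∈ s.val, ε i) * (b.exteriorPower n).repr x s := by
  have key : (b.exteriorPower n).coord s ∘ₗ map n f =
      (∏ i ∈ s.val, ε i) • (b.exteriorPower n).coord s := by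
    refine (b.exteriorPower n).ext fun t => ?_
    rw [LinearMap.comp_apply, LinearMap.smul_apply, coe_basis,
      map_ιMulti_family_of_apply_eq_smul hf, map_smul, Module.Basis.coord_apply,
      ← coe_basis, Module.Basis.repr_self, Finsupp.single_apply]
    split_ifs with h
    · rw [h]
    · simp
  exact LinearMap.congr_fun key x

end exteriorPower

namespace Matrix

variable {ι R : Type*} [Fintype ι] [DecidableEq ι] [CommRing R]

theorem diagonal_mem_orthogonalGroup {ε : ι → R} (hε : ∀ i, ε i * ε i = 1) :
    diagonal ε ∈ orthogonalGroup ι R := by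
  rw [mem_orthogonalGroup_iff, diagonal_transpose, diagonal_mul_diagonal, ← diagonal_one]
  exact congrArg diagonal (funext hε)

theorem toLin'_diagonal_basisFun (ε : ι → R) (i : ι) :
    toLin' (diagonal ε) (Pi.basisFun R ι i) = ε i • Pi.basisFun R ι i := by
  ext k
  by_cases h : k = i <;> simp [h]

variable (R) in
theorem diagonal_neg_one_on_mem_orthogonalGroup (T : Finset ι) :
    diagonal (fun k => if k ∈ T then (-1 : R) else 1) ∈ orthogonalGroup ι R :=
  diagonal_mem_orthogonalGroup fun k => by split_ifs <;> simp

variable (R) in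
theorem det_diagonal_neg_one_on (T : Finset ι) :
    (diagonal fun k => if k ∈ T then (-1 : R) else 1).det = (-1) ^ T.card := by
  rw [det_diagonal, Finset.prod_ite_mem, Finset.univ_inter, Finset.prod_const]

end Matrix

/-- Let `0 < d < n`. If `w ∈ ⋀^d(ℝ^n)` is fixed by `Λ^d(g)` for every
`g ∈ SO(n)` (orthogonal matrices of determinant one), then `w = 0`: the subspace of
`SO(n)`-invariant vectors in the `d`-th exterior power of `ℝ^n` is trivial for `0 < d < n`.
(Here `Λ^d(g)` is realized as the restriction to `⋀[ℝ]^d (Fin n → ℝ)` of the algebra map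
`ExteriorAlgebra.map` induced by the linear map of `g`.) -/
theorem stmt_10 (n d : ℕ) (hd0 : 0 < d) (hdn : d < n)
    (w : ExteriorAlgebra ℝ (Fin n → ℝ)) (hw : w ∈ ⋀[ℝ]^d (Fin n → ℝ))
    (hinv : ∀ g : Matrix (Fin n) (Fin n) ℝ, g ∈ Matrix.orthogonalGroup (Fin n) ℝ →
      g.det = 1 → ExteriorAlgebra.map (Matrix.toLin' g) w = w) :
    w = 0 := by
  let x : ⋀[ℝ]^d (Fin n → ℝ) := ⟨w, hw⟩
  suffices x = 0 from congrArg Subtype.val this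
  refine ((Pi.basisFun ℝ (Fin n)).exteriorPower d).repr.injective (Finsupp.ext fun s => ?_)
  obtain ⟨i, hi⟩ : s.val.Nonempty := Finset.card_pos.1 ((card_eq s).symm ▸ hd0)
  obtain ⟨j, -, hj⟩ : ∃ j ∈ Finset.univ, j ∉ s.val :=
    Finset.exists_mem_notMem_of_card_lt_card (by simpa [card_eq s] using hdn)
  have hij : i ≠ j := ne_of_mem_of_not_mem hi hj
  let ε : Fin n → ℝ := fun k => if k ∈ ({i, j} : Finset (Fin n)) then -1 else 1
  have hfix : exteriorPower.map d (Matrix.toLin' (Matrix.diagonal ε)) x = x :=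
    Subtype.ext <| (exteriorPower.coe_map _ _ x).trans <|
      hinv _ (Matrix.diagonal_neg_one_on_mem_orthogonalGroup ℝ _)
        (by rw [Matrix.det_diagonal_neg_one_on, Finset.card_pair hij]; norm_num)
  have hsign : ∏ k ∈ s.val, ε k = -1 := by
    rw [Finset.prod_ite_mem, Finset.inter_insert_of_mem hi, Finset.inter_singleton_of_notMem hj]
    simp
  have hrepr := exteriorPower.basis_repr_map_of_apply_eq_smul (Pi.basisFun ℝ (Fin n))
    (Matrix.toLin'_diagonal_basisFun ε) x s
  rw [hfix, hsign] at hrepr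
  simp only [map_zero, Finsupp.coe_zero, Pi.zero_apply]
  linarith
end

section
/- Fix n ∈ ℕ and set r := ⌊n/2⌋. Define ρ_n(j) := π^{−2j} · C(2(n−j), n−j) for 0 ≤ j ≤ n, where C(a,b) is the binomial coefficient. Then the (r+1)×(r+1) real symmetric Hankel matrix whose (j_1, j_2) entry is ρ_n(j_1 + j_2), for 0 ≤ j_1, j_2 ≤ r, is positive definite. -/
/-!
Since `C(2m, m) = π⁻¹ ∫₀^π (2 sin θ)^(2m) dθ`, the matrix is `π⁻¹` times the Gram matrix
`∫₀^π Fᵢ Fⱼ` of the functions `Fᵢ(θ) = π^(-2i) (2 sin θ)^(n - 2i)`, `0 ≤ i ≤ ⌊n/2⌋`.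
Their linear combinations are polynomials in `2 sin θ` with distinct exponents `n - 2i`, so a
nontrivial combination is nonzero somewhere on `(0, π)`, and the Gram matrix is positive definite.
-/

open Real Polynomial Finset Matrix

theorem choose_two_mul_self_eq_four_pow_mul_prod (m : ℕ) :
    ((2 * m).choose m : ℝ) = 4 ^ m * ∏ i ∈ range m, (2 * (i : ℝ) + 1) / (2 * i + 2) := by
  induction m with
  | zero => simp
  | succ k ih =>
    have hrec : ((k : ℝ) + 1) * ((2 * (k + 1)).choose (k + 1) : ℝ) =
        2 * (2 * k + 1) * ((2 * k).choose k : ℝ) := by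
      exact_mod_cast Nat.succ_mul_centralBinom_succ k
    rw [prod_range_succ, pow_succ, mul_mul_mul_comm, ← ih]
    field_simp
    linear_combination 2 * hrec

theorem integral_two_mul_sin_pow_two_mul (m : ℕ) :
    ∫ θ in 0..π, (2 * sin θ) ^ (2 * m) = π * (2 * m).choose m := by
  simp_rw [mul_pow, pow_mul (2 : ℝ)]
  rw [intervalIntegral.integral_const_mul, integral_sin_pow_even,
    choose_two_mul_self_eq_four_pow_mul_prod]
  ring

theorem Matrix.posDef_of_integral_mul {ι : Type*} [Fintype ι] {a b : ℝ} {f : ι → ℝ → ℝ}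
    (hf : ∀ i, Continuous (f i))
    (hf_indep : ∀ x : ι → ℝ, x ≠ 0 → ∃ θ ∈ Set.Ioo a b, ∑ i, x i * f i θ ≠ 0) :
    (of fun i j => ∫ θ in a..b, f i θ * f j θ).PosDef := by
  refine posDef_iff_dotProduct_mulVec.2 ⟨?_, fun x hx => ?_⟩
  · ext i j
    simp [mul_comm]
  obtain ⟨c, hc, hfc⟩ := hf_indep x hx
  have hquad : star x ⬝ᵥ (of (fun i j => ∫ θ in a..b, f i θ * f j θ) *ᵥ x) =
      ∫ θ in a..b, (∑ i, x i * f i θ) ^ 2 := by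
    simp only [sq, sum_mul_sum]
    simp only [dotProduct, mulVec, of_apply, star_trivial, mul_sum]
    rw [intervalIntegral.integral_finsetSum fun i _ =>
      (by fun_prop : Continuous _).intervalIntegrable _ _]
    refine sum_congr rfl fun i _ => ?_
    rw [intervalIntegral.integral_finsetSum fun j _ =>
      (by fun_prop : Continuous _).intervalIntegrable _ _]
    refine sum_congr rfl fun j _ => ?_
    rw [← intervalIntegral.integral_mul_const, ← intervalIntegral.integral_const_mul]
    congr 1 with θ
    ring
  rw [hquad]
  exact intervalIntegral.integral_pos (hc.1.trans hc.2) (by fun_prop)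
    (fun θ _ => sq_nonneg _) ⟨c, Set.Ioo_subset_Icc_self hc, by positivity⟩

theorem Polynomial.coeff_sum_monomial_of_injective {R ι : Type*} [Semiring R] [Fintype ι]
    {e : ι → ℕ} (he : Function.Injective e) (c : ι → R) (i : ι) :
    (∑ j, monomial (e j) (c j)).coeff (e i) = c i := by
  rw [finsetSum_coeff, sum_eq_single i
    (fun j _ hji => coeff_monomial_of_ne (c j) (he.ne hji).symm) (by simp), coeff_monomial_same]

theorem Polynomial.exists_eval_two_mul_sin_ne_zero {Q : ℝ[X]} (hQ : Q ≠ 0) :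
    ∃ θ ∈ Set.Ioo 0 π, Q.eval (2 * sin θ) ≠ 0 := by
  by_contra! h
  refine hQ (eq_zero_of_infinite_isRoot Q ((Set.Ioo_infinite (by norm_num : (0 : ℝ) < 2)).mono
    fun s hs => ?_))
  have hs' : s / 2 ∈ Set.Icc (-1) 1 := ⟨by linarith [hs.1], by linarith [hs.2]⟩
  have := h (arcsin (s / 2)) ⟨arcsin_pos.2 (by linarith [hs.1]),
    (arcsin_le_pi_div_two _).trans_lt (by linarith [pi_pos])⟩
  rwa [sin_arcsin hs'.1 hs'.2, mul_div_cancel₀ _ two_ne_zero] at this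

noncomputable def scaledSinPow (n i : ℕ) (θ : ℝ) : ℝ :=
  π ^ (-(2 * i : ℤ)) * (2 * sin θ) ^ (n - 2 * i)

theorem continuous_scaledSinPow (n i : ℕ) : Continuous (scaledSinPow n i) := by
  unfold scaledSinPow
  fun_prop

theorem integral_scaledSinPow_mul {n i j : ℕ} (hi : 2 * i ≤ n) (hj : 2 * j ≤ n) :
    ∫ θ in 0..π, scaledSinPow n i θ * scaledSinPow n j θ =
      π * (π ^ (-(2 * (i + j) : ℤ)) * (2 * (n - (i + j))).choose (n - (i + j))) := by
  have hmul : ∀ θ, scaledSinPow n i θ * scaledSinPow n j θ =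
      π ^ (-(2 * (i + j) : ℤ)) * (2 * sin θ) ^ (2 * (n - (i + j))) := fun θ => by
    rw [scaledSinPow, scaledSinPow, mul_mul_mul_comm, ← zpow_add₀ pi_ne_zero, ← pow_add]
    congr 2 <;> omega
  simp_rw [hmul]
  rw [intervalIntegral.integral_const_mul, integral_two_mul_sin_pow_two_mul]
  ring

theorem exists_sum_scaledSinPow_ne_zero {n : ℕ} {x : Fin (n / 2 + 1) → ℝ} (hx : x ≠ 0) :
    ∃ θ ∈ Set.Ioo 0 π, ∑ i, x i * scaledSinPow n i θ ≠ 0 := by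
  set Q : ℝ[X] := ∑ i : Fin (n / 2 + 1), monomial (n - 2 * i) (x i * π ^ (-(2 * i : ℤ)))
  have he : Function.Injective fun i : Fin (n / 2 + 1) => n - 2 * (i : ℕ) := fun i j hij => by
    have := i.isLt
    have := j.isLt
    simp only at hij
    omega
  have hQ : Q ≠ 0 := by
    obtain ⟨i, hi⟩ := Function.ne_iff.1 hx
    refine ne_of_apply_ne (coeff · (n - 2 * i)) ?_
    simp only [Q, coeff_sum_monomial_of_injective he, coeff_zero]
    exact mul_ne_zero hi (zpow_ne_zero _ pi_ne_zero)
  obtain ⟨θ, hθ, hQθ⟩ := exists_eval_two_mul_sin_ne_zero hQ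
  refine ⟨θ, hθ, ?_⟩
  simpa [Q, eval_finsetSum, scaledSinPow, mul_assoc] using hQθ

/-- Fix `n ∈ ℕ` and set `r := ⌊n/2⌋`. With
`ρ_n(j) := π^(−2j) · C(2(n−j), n−j)`, the `(r+1)×(r+1)` real symmetric Hankel matrix with
entries `ρ_n(j₁ + j₂)` for `0 ≤ j₁, j₂ ≤ r` is positive definite. -/
theorem stmt_11 (n : ℕ) :
    Matrix.PosDef (Matrix.of fun j₁ j₂ : Fin (n / 2 + 1) =>
      Real.pi ^ (-(2 * ((j₁ : ℕ) + (j₂ : ℕ)) : ℤ)) *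
        ((Nat.choose (2 * (n - ((j₁ : ℕ) + (j₂ : ℕ)))) (n - ((j₁ : ℕ) + (j₂ : ℕ))) : ℝ))) := by
  have hgram := (posDef_of_integral_mul (fun i : Fin (n / 2 + 1) => continuous_scaledSinPow n i)
    fun _ hx => exists_sum_scaledSinPow_ne_zero hx).smul (inv_pos.2 pi_pos)
  convert hgram using 1
  ext i j
  have hi := i.isLt
  have hj := j.isLt
  rw [Matrix.smul_apply, of_apply, of_apply, integral_scaledSinPow_mul (by omega) (by omega),
    smul_eq_mul, inv_mul_cancel_left₀ pi_ne_zero]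
end

section
/- For every m ∈ ℕ, the (m+1)×(m+1) Hankel matrix whose (i, j) entry is the central binomial coefficient C(2(i+j), i+j), for 0 ≤ i, j ≤ m, is positive definite; equivalently, for every nonzero real vector (ζ_0, …, ζ_m), one has Σ_{i,j=0}^{m} C(2(i+j), i+j) · ζ_i · ζ_j > 0. -/
/-!
Vandermonde's identity `C(2i+2j, i+j) = ∑ₖ C(2i, i+k) C(2j, j-k)` over `k ∈ ℤ`, together with the
symmetry `C(2j, j-k) = C(2j, j+k)`, folds the terms with `k < 0` onto those with `k > 0`. This
writes the Hankel matrix as `Bᵀ D B` with `D = diag(1, 2, 2, …)` and `B s i = C(2i, i+s)`, which is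
upper unitriangular, so the matrix is congruent to a positive diagonal matrix.
-/

open Finset Matrix

theorem Nat.choose_two_mul_add_eq_sum {n i j : ℕ} (hi : i < n) (hj : j < n) :
    (2 * (i + j)).choose (i + j) =
      ∑ s ∈ range n,
        (if s = 0 then 1 else 2) * ((2 * i).choose (i + s) * (2 * j).choose (j + s)) := by
  set f : ℕ → ℕ := fun s => (2 * i).choose (i + s) * (2 * j).choose (j + s)
  have hf : ∀ s, i < s ∨ j < s → f s = 0 := by
    rintro s (h | h)
    · simp [f, Nat.choose_eq_zero_of_lt (show 2 * i < i + s by omega)]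
    · simp [f, Nat.choose_eq_zero_of_lt (show 2 * j < j + s by omega)]
  have vandermonde :
      (2 * (i + j)).choose (i + j) = ∑ t ∈ range i, f (t + 1) + ∑ s ∈ range (j + 1), f s := by
    rw [mul_add, Nat.add_choose_eq, Nat.sum_antidiagonal_eq_sum_range_succ_mk,
      show (i + j).succ = i + (j + 1) by omega, sum_range_add, ← sum_range_reflect]
    congr 1 <;> refine sum_congr rfl fun s hs => ?_ <;> rw [mem_range] at hs
    · rw [Nat.choose_symm_of_eq_add (show 2 * i = i - 1 - s + (i + (s + 1)) by omega),
        show i + j - (i - 1 - s) = j + (s + 1) by omega]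
    · rw [Nat.choose_symm_of_eq_add (show 2 * j = i + j - (i + s) + (j + s) by omega)]
  obtain ⟨N, rfl⟩ : ∃ N, n = N + 1 := ⟨n - 1, by omega⟩
  have extend_left : ∑ t ∈ range i, f (t + 1) = ∑ t ∈ range N, f (t + 1) :=
    sum_subset (range_subset_range.2 (by omega)) fun t _ ht =>
      hf _ (Or.inl (by simp at ht; omega))
  have extend_right : ∑ s ∈ range (j + 1), f s = ∑ s ∈ range (N + 1), f s :=
    sum_subset (range_subset_range.2 (by omega)) fun s _ hs =>
      hf _ (Or.inr (by simp at hs; omega))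
  change _ = ∑ s ∈ range (N + 1), (if s = 0 then 1 else 2) * f s
  rw [vandermonde, extend_left, extend_right, sum_range_succ', sum_range_succ' _ N]
  simp only [Nat.add_one_ne_zero, if_true, if_false, ← mul_sum]
  ring

theorem Matrix.IsUpperTriangular.mulVec_injective {K n : Type*} [Field K] [Fintype n]
    [LinearOrder n] {M : Matrix n n K} (hM : M.IsUpperTriangular)
    (hdiag : ∀ i, M i i ≠ 0) : Function.Injective M.mulVec := by
  rw [mulVec_injective_iff_isUnit, isUnit_iff_isUnit_det, det_of_isUpperTriangular hM,
    isUnit_iff_ne_zero]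
  exact prod_ne_zero_iff.2 fun i _ => hdiag i

theorem Matrix.dotProduct_mulVec_self_eq_sum {R n : Type*} [Fintype n] [CommSemiring R]
    (A : Matrix n n R) (x : n → R) :
    x ⬝ᵥ (A *ᵥ x) = ∑ i, ∑ j, A i j * x i * x j := by
  simp only [dotProduct, mulVec, mul_sum]
  exact sum_congr rfl fun i _ => sum_congr rfl fun j _ => by ring

def centralBinomHankel (n : ℕ) : Matrix (Fin n) (Fin n) ℝ :=
  of fun i j => ((2 * ((i : ℕ) + j)).choose (i + j) : ℝ)

def centralBinomFactor (n : ℕ) : Matrix (Fin n) (Fin n) ℝ :=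
  of fun s i => ((2 * (i : ℕ)).choose (i + s) : ℝ)

theorem centralBinomFactor_isUpperTriangular (n : ℕ) :
    (centralBinomFactor n).IsUpperTriangular := fun s i hi => by
  have : 2 * (i : ℕ) < i + s := by rw [id, id, Fin.lt_def] at hi; omega
  simp [centralBinomFactor, Nat.choose_eq_zero_of_lt this]

theorem centralBinomFactor_apply_self (n : ℕ) (i : Fin n) : centralBinomFactor n i i = 1 := by
  simp [centralBinomFactor, ← two_mul]

theorem centralBinomHankel_eq_conjTranspose_mul_diagonal_mul (n : ℕ) :
    centralBinomHankel n = (centralBinomFactor n)ᴴ *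
      diagonal (fun s : Fin n => if (s : ℕ) = 0 then 1 else 2) * centralBinomFactor n := by
  ext i j
  rw [mul_apply]
  simp only [mul_diagonal, conjTranspose_apply, star_trivial, centralBinomHankel,
    centralBinomFactor, of_apply]
  rw [Nat.choose_two_mul_add_eq_sum i.2 j.2, Fin.sum_univ_eq_sum_range
    (fun s => ((2 * (i : ℕ)).choose (i + s) : ℝ) * (if s = 0 then 1 else 2) *
      (2 * (j : ℕ)).choose (j + s))]
  push_cast
  exact sum_congr rfl fun s _ => by ring

theorem centralBinomHankel_posDef (n : ℕ) : (centralBinomHankel n).PosDef := by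
  rw [centralBinomHankel_eq_conjTranspose_mul_diagonal_mul]
  have hD : (diagonal fun s : Fin n => if (s : ℕ) = 0 then (1 : ℝ) else 2).PosDef :=
    posDef_diagonal_iff.2 fun s => by split_ifs <;> norm_num
  exact hD.conjTranspose_mul_mul_same <| (centralBinomFactor_isUpperTriangular n).mulVec_injective
    fun i => by simp [centralBinomFactor_apply_self]

/-- For every `m ∈ ℕ`, the `(m+1)×(m+1)` Hankel matrix whose `(i, j)` entry is
the central binomial coefficient `C(2(i+j), i+j)` is positive definite; equivalently, for every
nonzero real vector `(ζ_0, …, ζ_m)` one has `∑_{i,j} C(2(i+j), i+j) ζ_i ζ_j > 0`. -/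
theorem stmt_12 (m : ℕ) :
    Matrix.PosDef (Matrix.of fun i j : Fin (m + 1) =>
        (((2 * ((i : ℕ) + (j : ℕ))).choose ((i : ℕ) + (j : ℕ)) : ℝ))) ∧
    ∀ ζ : Fin (m + 1) → ℝ, ζ ≠ 0 →
      0 < ∑ i : Fin (m + 1), ∑ j : Fin (m + 1),
        (((2 * ((i : ℕ) + (j : ℕ))).choose ((i : ℕ) + (j : ℕ)) : ℝ)) * ζ i * ζ j := by
  have hH := centralBinomHankel_posDef (m + 1)
  refine ⟨hH, fun ζ hζ => ?_⟩
  simpa [dotProduct_mulVec_self_eq_sum, centralBinomHankel] using hH.dotProduct_mulVec_pos hζ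
end

section
/- For every natural number n, ∫_0^4 x^n · π^{−1} · (x(4−x))^{−1/2} dx = C(2n, n), the central binomial coefficient. In particular (taking n = 0), the function p(x) := π^{−1}(x(4−x))^{−1/2} is a probability density on the interval (0, 4). -/
/-!
Substituting `x = 4 sin² u`, `u ∈ (0, π/2)`, turns `dx / √(x (4 - x))` into `2 du` and `x ^ n`
into `4 ^ n sin u ^ (2n)`, so the `n`-th moment is `(2 · 4 ^ n / π) ∫₀^{π/2} sin u ^ (2n) du`,
which Wallis' formula evaluates to `C(2n, n)`.
-/

open MeasureTheory Real Set

lemma prod_range_div_eq_centralBinom_div_four_pow (n : ℕ) :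
    ∏ i ∈ Finset.range n, ((2 * i + 1) / (2 * i + 2) : ℝ) = n.centralBinom / 4 ^ n := by
  induction n with
  | zero => simp
  | succ k ih =>
    have h : ((k + 1 : ℕ) : ℝ) * (k + 1).centralBinom = 2 * (2 * k + 1) * k.centralBinom := by
      exact_mod_cast Nat.succ_mul_centralBinom_succ k
    rw [Finset.prod_range_succ, ih]
    push_cast at h
    field_simp
    linear_combination (-2 * (4 : ℝ) ^ k) * h

lemma integral_sin_pow_zero_pi_div_two (k : ℕ) :
    ∫ x in 0..π / 2, sin x ^ k = (∫ x in 0..π, sin x ^ k) / 2 := by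
  have hint : ∀ a b : ℝ, IntervalIntegrable (fun x => sin x ^ k) volume a b :=
    fun a b => (by fun_prop : Continuous fun x => sin x ^ k).intervalIntegrable a b
  have hreflect : ∫ x in π / 2..π, sin x ^ k = ∫ x in 0..π / 2, sin x ^ k := by
    simpa [sin_pi_sub, show π - π / 2 = π / 2 by ring] using
      (intervalIntegral.integral_comp_sub_left (fun x => sin x ^ k) π (a := 0) (b := π / 2)).symm
  rw [← intervalIntegral.integral_add_adjacent_intervals (hint 0 (π / 2)) (hint (π / 2) π),
    hreflect]
  ring

lemma integral_sin_pow_two_mul_zero_pi_div_two (n : ℕ) :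
    ∫ x in 0..π / 2, sin x ^ (2 * n) = π / 2 * n.centralBinom / 4 ^ n := by
  rw [integral_sin_pow_zero_pi_div_two, integral_sin_pow_even,
    prod_range_div_eq_centralBinom_div_four_pow]
  ring

lemma setIntegral_Ioo_zero_eq_integral_comp_sin_sq {E : Type*} [NormedAddCommGroup E]
    [NormedSpace ℝ E] {a : ℝ} (ha : 0 ≤ a) (g : ℝ → E) :
    ∫ x in Ioo 0 a, g x = ∫ u in Ioo 0 (π / 2), (2 * a * sin u * cos u) • g (a * sin u ^ 2) := by
  have hsubst := integral_Icc_deriv_smul_of_deriv_nonneg (g := g)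
    (f := fun u => a * sin u ^ 2) (f' := fun u => 2 * a * sin u * cos u)
    (a := 0) (b := π / 2) (by fun_prop) (fun u _ => by
      have h : HasDerivAt (fun u => a * sin u ^ 2) (a * (2 * sin u * cos u)) u := by
        simpa using ((hasDerivAt_sin u).pow 2).const_mul a
      exact h.congr_deriv (by ring))
    (fun u hu => by
      have hsin := sin_nonneg_of_nonneg_of_le_pi hu.1.le (by linarith [hu.2, pi_pos])
      have hcos := cos_nonneg_of_mem_Icc ⟨by linarith [hu.1, pi_pos], hu.2.le⟩
      positivity)
    (by positivity)
  simp only [sin_zero, sin_pi_div_two] at hsubst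
  rw [← integral_Icc_eq_integral_Ioo, ← integral_Icc_eq_integral_Ioo]
  simpa using hsubst.symm

lemma rpow_neg_one_half_sq {c : ℝ} (hc : 0 ≤ c) : (c ^ 2) ^ (-(1 : ℝ) / 2) = c⁻¹ := by
  rw [neg_div, rpow_neg (sq_nonneg c), ← sqrt_eq_rpow, sqrt_sq hc]

lemma arcsine_integrand_comp_sin_sq (n : ℕ) {u : ℝ} (hu : u ∈ Ioo 0 (π / 2)) :
    (2 * 4 * sin u * cos u) •
        ((4 * sin u ^ 2) ^ n * π⁻¹ * (4 * sin u ^ 2 * (4 - 4 * sin u ^ 2)) ^ (-(1 : ℝ) / 2))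
      = 2 * 4 ^ n / π * sin u ^ (2 * n) := by
  have hsin : 0 < sin u := sin_pos_of_pos_of_lt_pi hu.1 (by linarith [hu.2, pi_pos])
  have hcos : 0 < cos u := cos_pos_of_mem_Ioo ⟨by linarith [hu.1, pi_pos], hu.2⟩
  have hsq : 4 * sin u ^ 2 * (4 - 4 * sin u ^ 2) = (4 * sin u * cos u) ^ 2 := by
    linear_combination (-16 * sin u ^ 2) * sin_sq_add_cos_sq u
  rw [hsq, rpow_neg_one_half_sq (by positivity), smul_eq_mul, mul_pow, pow_mul]
  field_simp

/-- For every natural number `n`,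
`∫_0^4 x^n · π⁻¹ · (x(4−x))^(−1/2) dx = C(2n, n)`, the central binomial coefficient.
(Taking `n = 0` shows that `p(x) = π⁻¹ (x(4−x))^(−1/2)` is a probability density on `(0,4)`.) -/
theorem stmt_13 (n : ℕ) :
    ∫ x in Set.Ioo (0 : ℝ) 4, x ^ n * Real.pi⁻¹ * (x * (4 - x)) ^ (-(1 : ℝ) / 2)
      = ((2 * n).choose n : ℝ) := by
  rw [setIntegral_Ioo_zero_eq_integral_comp_sin_sq (by norm_num),
    setIntegral_congr_fun measurableSet_Ioo fun u hu => arcsine_integrand_comp_sin_sq n hu,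
    ← integral_Ioc_eq_integral_Ioo, ← intervalIntegral.integral_of_le (by positivity),
    intervalIntegral.integral_const_mul, integral_sin_pow_two_mul_zero_pi_div_two,
    Nat.centralBinom_eq_two_mul_choose]
  field_simp
end
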